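/- arXiv:1710.08041 — 3 statements merged into one kernel-verified Lean document; each statement's English description precedes it below -/
import Mathlib

section
/- For all functions w ∈ C^1([a,b]) with w(a) = 0, the Hardy inequality ∫_a^b (w(x)/(x-a))^2 dx ≤ 4 ∫_a^b (w'(x))^2 dx holds. -/
/-!
Let `v = dslope w a`, so that `w x - w a = (x - a) v x` and `v` is continuous on `[a, b]`.
The function `(x - a) v² = (w - w a) v` vanishes at `a`, is nonnegative at `b`, and has derivative
`2 v w' - v²` on `(a, b)`; hence `∫ (2 v w' - v²) ≥ 0`. Since `(v - 2 w')² ≥ 0` says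
`v² ≤ 4 w'² - 2 (2 v w' - v²)`, integrating gives `∫ v² ≤ 4 ∫ w'²`.
-/

open Set Filter Topology MeasureTheory intervalIntegral

section DSlope

variable {𝕜 : Type*} [NontriviallyNormedField 𝕜]

theorem ContinuousOn.dslope {E : Type*} [NormedAddCommGroup E] [NormedSpace 𝕜 E]
    {f : 𝕜 → E} {a : 𝕜} {s : Set 𝕜} (hf : ContinuousOn f s)
    (ha : DifferentiableAt 𝕜 f a) : ContinuousOn (dslope f a) s := by
  intro x hx
  rcases eq_or_ne x a with rfl | hxa
  · exact (continuousAt_dslope_same.mpr ha).continuousWithinAt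
  · exact (continuousWithinAt_dslope_of_ne hxa).mpr (hf x hx)

theorem hasDerivAt_sub_mul_dslope {f : 𝕜 → 𝕜} {a x f' : 𝕜} (hxa : x ≠ a)
    (hf : HasDerivAt f f' x) :
    HasDerivAt (fun y => (f y - f a) * dslope f a y)
      (2 * dslope f a x * f' - dslope f a x ^ 2) x := by
  have heq : (fun y => (f y - f a) ^ 2 / (y - a)) =ᶠ[𝓝 x]
      fun y => (f y - f a) * dslope f a y := by
    filter_upwards [isOpen_ne.mem_nhds hxa] with y hy
    rw [dslope_of_ne _ hy, slope_def_field]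
    ring
  refine ((((hf.sub_const (f a)).pow 2).div ((hasDerivAt_id x).sub_const a)
    (sub_ne_zero.mpr hxa)).congr_of_eventuallyEq heq.symm).congr_deriv ?_
  simp only [id, Pi.pow_apply]
  rw [dslope_of_ne _ hxa, slope_def_field]
  field_simp [sub_ne_zero.mpr hxa]
  ring

end DSlope

theorem integral_dslope_sq_le_four_mul {w w' : ℝ → ℝ} {a b : ℝ} (hab : a ≤ b)
    (hw : ∀ x ∈ Icc a b, HasDerivAt w (w' x) x) (hw' : ContinuousOn w' (Icc a b)) :
    ∫ x in a..b, dslope w a x ^ 2 ≤ 4 * ∫ x in a..b, w' x ^ 2 := by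
  set v := dslope w a
  have hwc : ContinuousOn w (Icc a b) := fun x hx => (hw x hx).continuousAt.continuousWithinAt
  have hv : ContinuousOn v (Icc a b) := hwc.dslope (hw a (left_mem_Icc.mpr hab)).differentiableAt
  have hv2 : IntervalIntegrable (fun x => v x ^ 2) volume a b :=
    (hv.pow 2).intervalIntegrable_of_Icc hab
  have hw'2 : IntervalIntegrable (fun x => w' x ^ 2) volume a b :=
    (hw'.pow 2).intervalIntegrable_of_Icc hab
  have hD : IntervalIntegrable (fun x => 2 * v x * w' x - v x ^ 2) volume a b :=
    (((continuousOn_const.mul hv).mul hw').sub (hv.pow 2)).intervalIntegrable_of_Icc hab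
  have hftc : ∫ x in a..b, (2 * v x * w' x - v x ^ 2) = (w b - w a) * v b - (w a - w a) * v a :=
    integral_eq_sub_of_hasDerivAt_of_le hab ((hwc.sub continuousOn_const).mul hv)
      (fun x hx => hasDerivAt_sub_mul_dslope hx.1.ne' (hw x (Ioo_subset_Icc_self hx))) hD
  have hboundary : 0 ≤ (w b - w a) * v b := by
    rw [← sub_smul_dslope w a b, smul_eq_mul, mul_assoc, ← sq]
    exact mul_nonneg (sub_nonneg.mpr hab) (sq_nonneg _)
  have hmono :
      ∫ x in a..b, v x ^ 2 ≤ ∫ x in a..b, (4 * w' x ^ 2 - 2 * (2 * v x * w' x - v x ^ 2)) :=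
    integral_mono_on hab hv2 ((hw'2.const_mul 4).sub (hD.const_mul 2))
      fun x _ => by nlinarith [sq_nonneg (v x - 2 * w' x)]
  rw [integral_sub (hw'2.const_mul 4) (hD.const_mul 2), intervalIntegral.integral_const_mul,
    intervalIntegral.integral_const_mul, hftc, sub_self, zero_mul, sub_zero] at hmono
  linarith

/-- **Hardy inequality on an interval.** For every `w ∈ C¹([a,b])` with `w a = 0`,
`∫_a^b (w x / (x-a))² dx ≤ 4 ∫_a^b (w' x)² dx`. -/
theorem hardy_inequality_interval (a b : ℝ) (hab : a < b) (w w' : ℝ → ℝ)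
    (hderiv : ∀ x ∈ Set.Icc a b, HasDerivAt w (w' x) x)
    (hcont : ContinuousOn w' (Set.Icc a b))
    (hwa : w a = 0) :
    (∫ x in a..b, (w x / (x - a)) ^ 2) ≤ 4 * ∫ x in a..b, (w' x) ^ 2 := by
  have hquot : ∀ x ∈ Ioo a b, (w x / (x - a)) ^ 2 = dslope w a x ^ 2 := fun x hx => by
    rw [dslope_of_ne _ hx.1.ne', slope_def_field, hwa, sub_zero]
  rw [integral_congr_Ioo_of_le hab.le hquot]
  exact integral_dslope_sq_le_four_mul hab.le hderiv hcont
end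

section
/- Let φ(x) = 1/|x|^{2α-1} with α ∈ (1/2,1], and let u₁(x) = (G₁ * φ)(x) be the convolution with the Gaussian heat kernel G₁(x) = (4π)^{-3/2} e^{-|x|²/4} on ℝ³. Then sup_{x ∈ ℝ³} (1+|x|)^{2α-1} |u₁(x)| < ∞. -/
/-!
Split `u₁(x) = ∫ G₁(x - y) |y|^{-β}` with `β = 2α - 1 ∈ (0, 1]` along the triangle inequality
`1 + |x| ≤ (1 + |x - y|)(1 + |y|)`. The factor `(1 + |x - y|)^β` is absorbed by the Gaussian at
the cost of halving its exponent, and `(1 + |y|)^β |y|^{-β}` is bounded by `2` away from the unit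
ball and by `2 |y|^{-β}` on it. So `(1 + |x|)^β G₁(x - y) |y|^{-β}` is dominated by a multiple of
`exp(-|x - y|² / 8) + 1_{|y| < 1} |y|^{-β}`, whose integral does not depend on `x`, the Gaussian
being translation invariant and `|y|^{-β}` integrable near `0` since `β < 3`.
-/

open MeasureTheory Real

noncomputable section

abbrev E3 := EuclideanSpace ℝ (Fin 3)

namespace Real

lemma one_add_rpow_le_mul_of_le_add {β s t r : ℝ} (hβ : 0 ≤ β) (ht : 0 ≤ t) (hr : 0 ≤ r)
    (hs : 0 ≤ s) (hstr : s ≤ t + r) : (1 + s) ^ β ≤ (1 + t) ^ β * (1 + r) ^ β := by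
  rw [← mul_rpow (by positivity) (by positivity)]
  exact rpow_le_rpow (by positivity) (by nlinarith) hβ

lemma one_add_mul_exp_neg_sq_div_four_le (t : ℝ) :
    (1 + t) * exp (-t ^ 2 / 4) ≤ 3 * exp (-t ^ 2 / 8) := by
  have h : 1 + t ≤ 3 * exp (t ^ 2 / 8) := by
    nlinarith [add_one_le_exp (t ^ 2 / 8), sq_nonneg (t - 4 / 3)]
  calc (1 + t) * exp (-t ^ 2 / 4) ≤ 3 * exp (t ^ 2 / 8) * exp (-t ^ 2 / 4) :=
        mul_le_mul_of_nonneg_right h (exp_pos _).le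
    _ = 3 * exp (-t ^ 2 / 8) := by rw [mul_assoc, ← exp_add]; ring_nf

lemma one_add_rpow_mul_rpow_neg_le {β r : ℝ} (hβ0 : 0 ≤ β) (hβ1 : β ≤ 1) (hr : 0 ≤ r) :
    (1 + r) ^ β * r ^ (-β) ≤ 2 * if r < 1 then r ^ (-β) else 1 := by
  have two_rpow_le : (2 : ℝ) ^ β ≤ 2 := rpow_le_self_of_one_le one_le_two hβ1
  split_ifs with hr1
  · gcongr
    exact (rpow_le_rpow (by positivity) (by linarith) hβ0).trans two_rpow_le
  · have hr0 : 0 < r := by linarith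
    rw [rpow_neg hr, ← div_eq_mul_inv, ← div_rpow (by positivity) hr, mul_one]
    refine (rpow_le_rpow (by positivity) ?_ hβ0).trans two_rpow_le
    rw [div_le_iff₀ hr0]
    linarith

/-- Applied with `s = ‖x‖`, `t = ‖x - y‖`, `r = ‖y‖`. -/
lemma one_add_rpow_mul_exp_mul_rpow_neg_le {β s t r : ℝ} (hβ0 : 0 ≤ β) (hβ1 : β ≤ 1)
    (ht : 0 ≤ t) (hr : 0 ≤ r) (hs : 0 ≤ s) (hstr : s ≤ t + r) :
    (1 + s) ^ β * (exp (-t ^ 2 / 4) * r ^ (-β)) ≤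
      6 * (exp (-t ^ 2 / 8) + if r < 1 then r ^ (-β) else 0) := by
  calc (1 + s) ^ β * (exp (-t ^ 2 / 4) * r ^ (-β))
      ≤ (1 + t) ^ β * (1 + r) ^ β * (exp (-t ^ 2 / 4) * r ^ (-β)) := by
        gcongr
        exact one_add_rpow_le_mul_of_le_add hβ0 ht hr hs hstr
    _ = ((1 + t) ^ β * exp (-t ^ 2 / 4)) * ((1 + r) ^ β * r ^ (-β)) := by ring
    _ ≤ ((1 + t) * exp (-t ^ 2 / 4)) * (2 * if r < 1 then r ^ (-β) else 1) :=
        mul_le_mul (mul_le_mul_of_nonneg_right (rpow_le_self_of_one_le (by linarith) hβ1)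
          (exp_pos _).le) (one_add_rpow_mul_rpow_neg_le hβ0 hβ1 hr) (by positivity)
          (by positivity)
    _ ≤ (3 * exp (-t ^ 2 / 8)) * (2 * if r < 1 then r ^ (-β) else 1) :=
        mul_le_mul_of_nonneg_right (one_add_mul_exp_neg_sq_div_four_le t)
          (by split_ifs <;> positivity)
    _ ≤ 6 * (exp (-t ^ 2 / 8) + if r < 1 then r ^ (-β) else 0) := by
        have : 0 ≤ r ^ (-β) := rpow_nonneg hr _
        have : exp (-t ^ 2 / 8) ≤ 1 := exp_le_one_iff.2 (by nlinarith)
        split_ifs <;> nlinarith [exp_pos (-t ^ 2 / 8)]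

end Real

section InnerProductSpace

variable {V : Type*} [NormedAddCommGroup V] [InnerProductSpace ℝ V] [FiniteDimensional ℝ V]
  [MeasurableSpace V] [BorelSpace V]

lemma integrable_exp_neg_mul_sq_norm {b : ℝ} (hb : 0 < b) :
    Integrable (fun v : V => exp (-b * ‖v‖ ^ 2)) := by
  refine (GaussianFourier.integrable_cexp_neg_mul_sq_norm_add
    (b := (b : ℂ)) (by simpa using hb) 0 (0 : V)).norm.congr (.of_forall fun v => ?_)
  simp only [zero_mul, add_zero, Complex.norm_exp]
  norm_cast

lemma integrable_indicator_ball_rpow_neg_norm {β : ℝ} (hβ0 : 0 ≤ β)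
    (hβ : β < Module.finrank ℝ V) :
    Integrable ((Metric.ball (0 : V) 1).indicator fun y => ‖y‖ ^ (-β)) := by
  have hd : 0 < Module.finrank ℝ V := by exact_mod_cast hβ0.trans_lt hβ
  rw [integrable_indicator_iff measurableSet_ball]
  refine integrableOn_ball_of_norm_le_rpow (C := 1) hd hβ (.of_forall fun y => ?_)
    (by fun_prop : Measurable fun y : V => ‖y‖ ^ (-β)).aestronglyMeasurable
  rw [one_mul, norm_of_nonneg (rpow_nonneg (norm_nonneg y) _)]

theorem exists_one_add_norm_rpow_mul_integral_gaussian_mul_rpow_neg_le {β : ℝ} (hβ0 : 0 ≤ β)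
    (hβ1 : β ≤ 1) (hβ : β < Module.finrank ℝ V) :
    ∃ C, ∀ x : V, (1 + ‖x‖) ^ β * ∫ y, exp (-‖x - y‖ ^ 2 / 4) * ‖y‖ ^ (-β) ≤ C := by
  set w : V → ℝ := (Metric.ball (0 : V) 1).indicator fun y => ‖y‖ ^ (-β)
  have hw : Integrable w := integrable_indicator_ball_rpow_neg_norm hβ0 hβ
  have hgauss : Integrable fun v : V => exp (-‖v‖ ^ 2 / 8) := by
    simpa only [neg_mul, one_div, ← div_eq_inv_mul, neg_div]
      using integrable_exp_neg_mul_sq_norm (V := V) (b := 1 / 8) (by norm_num)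
  refine ⟨6 * ((∫ v : V, exp (-‖v‖ ^ 2 / 8)) + ∫ y, w y), fun x => ?_⟩
  have hgauss_x : Integrable fun y : V => exp (-‖x - y‖ ^ 2 / 8) := hgauss.comp_sub_left x
  have hw_apply (y : V) : w y = if ‖y‖ < 1 then ‖y‖ ^ (-β) else 0 := by
    by_cases hy : ‖y‖ < 1 <;> simp [w, hy]
  rw [← integral_const_mul]
  calc ∫ y, (1 + ‖x‖) ^ β * (exp (-‖x - y‖ ^ 2 / 4) * ‖y‖ ^ (-β))
      ≤ ∫ y, 6 * (exp (-‖x - y‖ ^ 2 / 8) + w y) := by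
        refine integral_mono_of_nonneg (.of_forall fun y => by positivity)
          ((hgauss_x.add hw).const_mul 6) (.of_forall fun y => ?_)
        dsimp only
        rw [hw_apply]
        exact one_add_rpow_mul_exp_mul_rpow_neg_le hβ0 hβ1 (norm_nonneg _) (norm_nonneg _)
          (norm_nonneg _) (by linarith [norm_le_norm_add_norm_sub' x y])
    _ = 6 * ((∫ v : V, exp (-‖v‖ ^ 2 / 8)) + ∫ y, w y) := by
        rw [integral_const_mul, integral_add hgauss_x hw,
          integral_sub_left_eq_self (fun v : V => exp (-‖v‖ ^ 2 / 8))]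

end InnerProductSpace

/-- Let `φ(x) = 1/|x|^{2α-1}` with `α ∈ (1/2, 1]`, and let `u₁ = G₁ * φ` be its convolution
with the Gaussian heat kernel at time `1`. Then `sup_x (1+|x|)^{2α-1} |u₁(x)| < ∞`. -/
theorem heat_convolution_decay (α : ℝ) (hα : α ∈ Set.Ioc (1/2 : ℝ) 1)
    (u₁ : E3 → ℝ)
    (hu₁ : ∀ x : E3, u₁ x =
      ∫ y : E3, (4 * π) ^ (-(3 : ℝ) / 2) * Real.exp (-‖x - y‖ ^ 2 / 4) * ‖y‖ ^ (1 - 2 * α)) :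
    ∃ C : ℝ, ∀ x : E3, (1 + ‖x‖) ^ (2 * α - 1) * |u₁ x| ≤ C := by
  obtain ⟨hα1, hα2⟩ := hα
  obtain ⟨C, hC⟩ := exists_one_add_norm_rpow_mul_integral_gaussian_mul_rpow_neg_le
    (V := E3) (β := 2 * α - 1) (by linarith) (by linarith) (by rw [finrank_euclideanSpace_fin]; push_cast; linarith)
  set K : ℝ := (4 * π) ^ (-(3 : ℝ) / 2)
  have hK : 0 ≤ K := rpow_nonneg (by positivity) _
  refine ⟨K * C, fun x => ?_⟩
  have hu₁x : u₁ x = K * ∫ y, exp (-‖x - y‖ ^ 2 / 4) * ‖y‖ ^ (-(2 * α - 1)) := by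
    simp_rw [hu₁, mul_assoc, integral_const_mul, neg_sub]
  rw [hu₁x, abs_of_nonneg (mul_nonneg hK (integral_nonneg fun y => by positivity)),
    mul_left_comm]
  exact mul_le_mul_of_nonneg_left (hC x) hK
end
end

section
/- Let α ∈ (0,1] and λ > 0. If ψ : ℝⁿ → ℝ is continuous, tends to 0 at infinity, and satisfies (-Δ)^α ψ + λψ = 0 pointwise on ℝⁿ (with (-Δ)^α defined by the principal value integral for α < 1, classically for α = 1), then ψ ≡ 0. -/
set_option maxHeartbeats 1000000


open MeasureTheory Real Filter Topology

noncomputable section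

/-- Key lemma: under the hypotheses, `ψ ≤ 0` everywhere (maximum principle half). -/
private lemma fractional_resolvent_key (n : ℕ) (α lam : ℝ)
    (hα : α ∈ Set.Ioc (0 : ℝ) 1) (hlam : 0 < lam)
    (ψ : EuclideanSpace ℝ (Fin n) → ℝ)
    (hcont : Continuous ψ)
    (hdecay : Tendsto ψ (cocompact (EuclideanSpace ℝ (Fin n))) (𝓝 0))
    (A : EuclideanSpace ℝ (Fin n) → ℝ)
    (hA_pv : α < 1 → ∀ x, Tendsto (fun ε : ℝ =>
        (α * (1 - α) * 4 ^ α * Real.Gamma ((n : ℝ) / 2 + α)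
            / (Real.Gamma (2 - α) * π ^ ((n : ℝ) / 2))) *
          ∫ y in {y | ε < dist x y}, (ψ x - ψ y) / dist x y ^ ((n : ℝ) + 2 * α))
        (𝓝[>] 0) (𝓝 (A x)))
    (hA_lap : α = 1 → ∀ x, A x =
        -∑ i : Fin n, fderiv ℝ (fun z => fderiv ℝ ψ z (EuclideanSpace.single i 1)) x
          (EuclideanSpace.single i 1))
    (heq : ∀ x, A x + lam * ψ x = 0) :
    ∀ x, ψ x ≤ 0 := by
  by_contra hcon
  push_neg at hcon
  obtain ⟨x₁, hx₁⟩ := hcon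
  -- existence of a global maximum point
  have hev : ∀ᶠ x in cocompact (EuclideanSpace ℝ (Fin n)), ψ x ≤ ψ x₁ := by
    have h := hdecay (Iio_mem_nhds hx₁)
    filter_upwards [h] with x hx using le_of_lt hx
  obtain ⟨x₀, hmax⟩ := hcont.exists_forall_ge' x₁ hev
  have hpos : 0 < ψ x₀ := lt_of_lt_of_le hx₁ (hmax x₁)
  rcases eq_or_lt_of_le hα.2 with h1 | h1
  · -- case α = 1
    have hsum : ∑ i : Fin n, fderiv ℝ
        (fun z => fderiv ℝ ψ z (EuclideanSpace.single i 1)) x₀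
        (EuclideanSpace.single i 1) = lam * ψ x₀ := by
      have h2 := heq x₀
      rw [hA_lap h1 x₀] at h2
      linarith
    have hex : ∃ i : Fin n, 0 < fderiv ℝ
        (fun z => fderiv ℝ ψ z (EuclideanSpace.single i 1)) x₀
        (EuclideanSpace.single i 1) := by
      by_contra hno
      push_neg at hno
      have hle : ∑ i : Fin n, fderiv ℝ
          (fun z => fderiv ℝ ψ z (EuclideanSpace.single i 1)) x₀
          (EuclideanSpace.single i 1) ≤ 0 :=
        Finset.sum_nonpos fun i _ => hno i
      nlinarith [mul_pos hlam hpos]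
    obtain ⟨i, hi⟩ := hex
    set e : EuclideanSpace ℝ (Fin n) := EuclideanSpace.single i 1 with he
    set g : EuclideanSpace ℝ (Fin n) → ℝ := fun z => fderiv ℝ ψ z e with hg
    set D : ℝ := fderiv ℝ g x₀ e with hD
    -- g is differentiable at x₀ (else junk value 0 contradicts hi)
    have hgdiff : DifferentiableAt ℝ g x₀ := by
      by_contra hnd
      rw [hD, fderiv_zero_of_not_differentiableAt hnd] at hi
      simp at hi
    -- g x₀ = 0 since x₀ is a local max of ψ
    have hg0 : g x₀ = 0 := by
      have hloc : IsLocalMax ψ x₀ := Filter.Eventually.of_forall fun y => hmax y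
      rw [hg]
      simp [hloc.fderiv_eq_zero]
    -- the line through x₀ in direction e
    have hL : ∀ t : ℝ, HasDerivAt (fun s : ℝ => x₀ + s • e) e t := by
      intro t
      simpa using ((hasDerivAt_id t).smul_const e).const_add x₀
    have hh : HasDerivAt (fun t : ℝ => g (x₀ + t • e)) D 0 := by
      have hF : HasFDerivAt g (fderiv ℝ g x₀) ((fun s : ℝ => x₀ + s • e) 0) := by
        simpa using hgdiff.hasFDerivAt
      exact hF.comp_hasDerivAt 0 (hL 0)
    -- eventually g (x₀ + t • e) > 0 for small t > 0
    have hev2 : ∀ᶠ t in 𝓝[>] (0:ℝ), 0 < g (x₀ + t • e) := by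
      rw [hasDerivAt_iff_tendsto_slope] at hh
      have hh2 : Tendsto (slope (fun t : ℝ => g (x₀ + t • e)) 0) (𝓝[>] 0) (𝓝 D) :=
        hh.mono_left (nhdsWithin_mono _ fun t ht => ne_of_gt ht)
      have hDpos : (0:ℝ) < D := hi
      filter_upwards [hh2.eventually (eventually_gt_nhds (by linarith : D/2 < D)),
        self_mem_nhdsWithin] with t hslope ht
      have ht' : (0:ℝ) < t := ht
      have hsl : slope (fun t : ℝ => g (x₀ + t • e)) 0 t = g (x₀ + t • e) / t := by
        rw [slope_def_field]
        simp [hg0]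
      rw [hsl] at hslope
      have h3 : 0 < g (x₀ + t • e) / t := by linarith
      have h4 := mul_pos h3 ht'
      rwa [div_mul_cancel₀ _ (ne_of_gt ht')] at h4
    obtain ⟨δ, hδ, hsub⟩ := mem_nhdsGT_iff_exists_Ioo_subset.mp hev2
    have hδ0 : (0:ℝ) < δ := hδ
    -- ψ is strictly increasing along the segment, contradicting maximality
    have hmono : StrictMonoOn (fun t : ℝ => ψ (x₀ + t • e)) (Set.Icc 0 δ) := by
      apply strictMonoOn_of_deriv_pos (convex_Icc 0 δ)
      · exact (hcont.comp (continuous_const.add (continuous_id.smul continuous_const))).continuousOn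
      · intro t ht
        rw [interior_Icc] at ht
        have hgt : 0 < g (x₀ + t • e) := hsub ht
        have hdiffψ : DifferentiableAt ℝ ψ (x₀ + t • e) := by
          by_contra hnd
          rw [hg] at hgt
          simp only [fderiv_zero_of_not_differentiableAt hnd] at hgt
          simp at hgt
        have hder : HasDerivAt (fun t : ℝ => ψ (x₀ + t • e))
            (g (x₀ + t • e)) t := by
          have hF : HasFDerivAt ψ (fderiv ℝ ψ (x₀ + t • e))
              ((fun s : ℝ => x₀ + s • e) t) := hdiffψ.hasFDerivAt
          exact hF.comp_hasDerivAt t (hL t)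
        rw [hder.deriv]
        exact hgt
    have hlt2 : ψ x₀ < ψ (x₀ + δ • e) := by
      have := hmono (Set.left_mem_Icc.mpr hδ0.le) (Set.right_mem_Icc.mpr hδ0.le) hδ0
      simpa using this
    exact absurd (hmax (x₀ + δ • e)) (not_le.mpr hlt2)
  · -- case α < 1
    have hA := hA_pv h1 x₀
    have hn2 : (0:ℝ) < (n : ℝ) / 2 + α := by
      have h0 : (0:ℝ) ≤ (n : ℝ) / 2 := by positivity
      linarith [hα.1]
    have hΓ1 : 0 < Real.Gamma ((n : ℝ) / 2 + α) := Real.Gamma_pos_of_pos hn2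
    have hΓ2 : 0 < Real.Gamma (2 - α) :=
      Real.Gamma_pos_of_pos (by linarith)
    have hc : 0 < α * (1 - α) * 4 ^ α * Real.Gamma ((n : ℝ) / 2 + α)
        / (Real.Gamma (2 - α) * π ^ ((n : ℝ) / 2)) := by
      have hπ : (0:ℝ) < π := Real.pi_pos
      have h1α : 0 < 1 - α := by linarith
      have hα0 : 0 < α := hα.1
      positivity
    have hA0 : 0 ≤ A x₀ := by
      refine ge_of_tendsto' hA fun ε => ?_
      refine mul_nonneg hc.le (MeasureTheory.setIntegral_nonneg ?_ ?_)
      · exact (isOpen_lt continuous_const (continuous_const.dist continuous_id)).measurableSet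
      · intro y _
        apply div_nonneg (sub_nonneg.2 (hmax y))
        positivity
    have h2 := heq x₀
    nlinarith [mul_pos hlam hpos]

/-- **Maximum-principle uniqueness for `(-Δ)^α + λ`.** Let `α ∈ (0,1]`, `λ > 0`. If
`ψ : ℝⁿ → ℝ` is continuous, tends to `0` at infinity, and satisfies
`(-Δ)^α ψ + λ ψ = 0` pointwise (with `(-Δ)^α` given by the principal value integral with
constant `c_{n,α}` when `α < 1`, and by `-Δ` when `α = 1`), then `ψ ≡ 0`. -/
theorem fractional_resolvent_uniqueness (n : ℕ) (α lam : ℝ)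
    (hα : α ∈ Set.Ioc (0 : ℝ) 1) (hlam : 0 < lam)
    (ψ : EuclideanSpace ℝ (Fin n) → ℝ)
    (hcont : Continuous ψ)
    (hdecay : Tendsto ψ (cocompact (EuclideanSpace ℝ (Fin n))) (𝓝 0))
    -- `A` is the value of `(-Δ)^α ψ`:
    (A : EuclideanSpace ℝ (Fin n) → ℝ)
    (hA_pv : α < 1 → ∀ x, Tendsto (fun ε : ℝ =>
        (α * (1 - α) * 4 ^ α * Real.Gamma ((n : ℝ) / 2 + α)
            / (Real.Gamma (2 - α) * π ^ ((n : ℝ) / 2))) *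
          ∫ y in {y | ε < dist x y}, (ψ x - ψ y) / dist x y ^ ((n : ℝ) + 2 * α))
        (𝓝[>] 0) (𝓝 (A x)))
    (hA_lap : α = 1 → ∀ x, A x =
        -∑ i : Fin n, fderiv ℝ (fun z => fderiv ℝ ψ z (EuclideanSpace.single i 1)) x
          (EuclideanSpace.single i 1))
    (heq : ∀ x, A x + lam * ψ x = 0) :
    ∀ x, ψ x = 0 := by
  have h1 := fractional_resolvent_key n α lam hα hlam ψ hcont hdecay A hA_pv hA_lap heq
  have h2 := fractional_resolvent_key n α lam hα hlam (fun x => -ψ x) hcont.neg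
    (by simpa using hdecay.neg) (fun x => -A x)
    (fun hlt x => by
      have h := (hA_pv hlt x).neg
      refine h.congr fun ε => ?_
      have hy : ∀ y, (-ψ x - -ψ y) / dist x y ^ ((n : ℝ) + 2 * α)
          = -((ψ x - ψ y) / dist x y ^ ((n : ℝ) + 2 * α)) := fun y => by ring
      simp only [hy, integral_neg, mul_neg])
    (fun h1' x => by
      rw [hA_lap h1' x]
      simp)
    (fun x => by have := heq x; linarith)
  intro x
  have ha := h1 x
  have hb := h2 x
  linarith
end
end
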